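/- Define g : (9,∞) → ℝ by g(x) = 2/(3x) − 1/(12(x−1)) + 5/(12(x+1)) − ln(1 + 1/x) − (1/(12(x+1)³) + 13/(120(x+1)⁴)) + (1/(12x³) + 13/(120x⁴)). Then g(x) > 0 for every x ∈ (9,∞). -/

import Mathlib

/-!
Bounding `log (1 + 1/x)` above by its alternating series truncated after six terms, plus the
geometric tail `x⁻⁷ / (1 - x⁻¹)`, leaves a rational function of `x` whose numerator
`56x⁷ - 322x⁶ - …` has only positive Taylor coefficients at `x = 9`.
-/

noncomputable def g (x : ℝ) : ℝ :=
  2 / (3 * x) - 1 / (12 * (x - 1)) + 5 / (12 * (x + 1)) - Real.log (1 + 1 / x)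
    - (1 / (12 * (x + 1) ^ 3) + 13 / (120 * (x + 1) ^ 4))
    + (1 / (12 * x ^ 3) + 13 / (120 * x ^ 4))

open Real Finset

theorem Real.log_one_add_le_neg_sum_add {t : ℝ} (ht : |t| < 1) (n : ℕ) :
    log (1 + t) ≤ -∑ i ∈ range n, (-t) ^ (i + 1) / (i + 1) + |t| ^ (n + 1) / (1 - |t|) := by
  have h := abs_log_sub_add_sum_range_le (x := -t) (by rwa [abs_neg]) n
  rw [abs_neg, sub_neg_eq_add] at h
  linarith [(abs_le.mp h).2]

theorem log_one_add_inv_le {x : ℝ} (hx : 1 < x) :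
    log (1 + 1 / x) ≤ 1 / x - 1 / (2 * x ^ 2) + 1 / (3 * x ^ 3) - 1 / (4 * x ^ 4)
      + 1 / (5 * x ^ 5) - 1 / (6 * x ^ 6) + 1 / (x ^ 6 * (x - 1)) := by
  have hx0 : 0 < x := by linarith
  have ht : |1 / x| < 1 := by
    rw [abs_of_pos (by positivity), div_lt_one hx0]
    exact hx
  refine (log_one_add_le_neg_sum_add ht 6).trans_eq ?_
  rw [abs_of_pos (by positivity)]
  have hx1 : x - 1 ≠ 0 := by linarith
  rw [show 1 - 1 / x = (x - 1) / x by field_simp]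
  simp only [one_div, sum_range_succ, range_one, sum_singleton, zero_add, pow_one,
    CharP.cast_eq_zero, div_one, Nat.reduceAdd, even_two, Even.neg_pow, inv_pow, Nat.cast_one,
    Nat.cast_ofNat, neg_add_rev, neg_neg, mul_inv_rev]
  field_simp
  ring

theorem septic_pos_of_nine_lt {x : ℝ} (hx : 9 < x) :
    0 < 56 * x ^ 7 - 322 * x ^ 6 - 1148 * x ^ 5 - 3437 * x ^ 4 - 5117 * x ^ 3
      - 3612 * x ^ 2 - 980 * x := by
  obtain ⟨y, hy, rfl⟩ : ∃ y, 0 < y ∧ x = y + 9 := ⟨x - 9, by linarith, by ring⟩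
  ring_nf
  positivity

theorem septic_div_le_g {x : ℝ} (hx : 1 < x) :
    (56 * x ^ 7 - 322 * x ^ 6 - 1148 * x ^ 5 - 3437 * x ^ 4 - 5117 * x ^ 3
      - 3612 * x ^ 2 - 980 * x) / (840 * x ^ 7 * (x - 1) * (x + 1) ^ 4) ≤ g x := by
  have hlog := log_one_add_inv_le hx
  have hx0 : x ≠ 0 := by positivity
  have hx1 : x - 1 ≠ 0 := by linarith
  have hx2 : x + 1 ≠ 0 := by positivity
  have hgap : 2 / (3 * x) - 1 / (12 * (x - 1)) + 5 / (12 * (x + 1))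
      - (1 / (12 * (x + 1) ^ 3) + 13 / (120 * (x + 1) ^ 4))
      + (1 / (12 * x ^ 3) + 13 / (120 * x ^ 4))
      - (1 / x - 1 / (2 * x ^ 2) + 1 / (3 * x ^ 3) - 1 / (4 * x ^ 4)
        + 1 / (5 * x ^ 5) - 1 / (6 * x ^ 6) + 1 / (x ^ 6 * (x - 1)))
      = (56 * x ^ 7 - 322 * x ^ 6 - 1148 * x ^ 5 - 3437 * x ^ 4 - 5117 * x ^ 3
        - 3612 * x ^ 2 - 980 * x) / (840 * x ^ 7 * (x - 1) * (x + 1) ^ 4) := by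
    field_simp
    ring
  unfold g
  linarith

theorem g_pos : ∀ x ∈ Set.Ioi (9 : ℝ), 0 < g x := by
  intro x (hx : 9 < x)
  have hden : 0 < 840 * x ^ 7 * (x - 1) * (x + 1) ^ 4 := by
    have : 0 < x - 1 := by linarith
    positivity
  exact (div_pos (septic_pos_of_nine_lt hx) hden).trans_le (septic_div_le_g (by linarith))
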